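/- arXiv:2004.11926 — 3 statements merged into one kernel-verified Lean document; each statement's English description precedes it below -/
import Mathlib

section
/- The merge function on ℝⁿ preserves the coordinatewise partial order: if a ≤ b in ℝⁿ then M_δ^G(a) ≤ M_δ^G(b), where M_δ^G is applied coordinatewise with respect to a multiparameter grid G with controlling constant c and δ < c/2. -/
open Classical in
/-- One-dimensional merge function with respect to a finite grid `G`. -/
noncomputable def mergeFn {k : ℕ} (G : Fin k → ℝ) (δ : ℝ) (x : ℝ) : ℝ :=
  if h : ∃ i, x ∈ Set.Icc (G i - δ) (G i + δ) then G h.choose else x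

open Classical in
theorem mergeFn_mono {k : ℕ} (G : Fin k → ℝ) {c δ : ℝ}
    (hc : ∀ s t, s ≠ t → c ≤ |G s - G t|) (hδ0 : 0 ≤ δ) (hδ : δ < c / 2)
    {x y : ℝ} (hxy : x ≤ y) : mergeFn G δ x ≤ mergeFn G δ y := by
  unfold mergeFn
  split_ifs with hx hy hy
  · -- both merged
    set i := hx.choose with hi
    set j := hy.choose with hj
    have hxi := hx.choose_spec
    have hyj := hy.choose_spec
    by_cases hij : i = j
    · rw [hij]
    · by_contra h
      push_neg at h
      have hsep := hc i j hij
      have h1 : G i - δ ≤ x := hxi.1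
      have h2 : y ≤ G j + δ := hyj.2
      have : |G i - G j| = G i - G j := abs_of_pos (by linarith)
      linarith [this ▸ hsep]
  · -- x merged, y not
    have hxi := hx.choose_spec
    set i := hx.choose
    have : y ∉ Set.Icc (G i - δ) (G i + δ) := fun h => hy ⟨i, h⟩
    rw [Set.mem_Icc, not_and_or] at this
    rcases this with h | h
    · push_neg at h; linarith [hxi.1]
    · push_neg at h; linarith
  · -- y merged, x not
    have hyj := hy.choose_spec
    set j := hy.choose
    have : x ∉ Set.Icc (G j - δ) (G j + δ) := fun h => hx ⟨j, h⟩
    rw [Set.mem_Icc, not_and_or] at this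
    rcases this with h | h
    · push_neg at h; linarith
    · push_neg at h; linarith [hyj.2]
  · exact hxy

/-- The coordinatewise merge function on ℝⁿ with respect to a multiparameter grid
`G = G¹ × ... × Gⁿ`. -/
noncomputable def mergeVec {n : ℕ} {k : Fin n → ℕ} (G : ∀ j, Fin (k j) → ℝ) (δ : ℝ)
    (a : Fin n → ℝ) : Fin n → ℝ :=
  fun j => mergeFn (G j) δ (a j)

/-- The merge function on ℝⁿ preserves the coordinatewise partial order:
if `a ≤ b` then `M_δ^G(a) ≤ M_δ^G(b)`, for a multiparameter grid with controlling
constant `c` (so `c ≤ |Gʲ s − Gʲ t|` for distinct grid values) and `0 ≤ δ < c/2`. -/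
theorem mergeVec_monotone {n : ℕ} {k : Fin n → ℕ} (G : ∀ j, Fin (k j) → ℝ)
    (hG : ∀ j, Function.Injective (G j))
    (c δ : ℝ) (hc : ∀ j s t, s ≠ t → c ≤ |G j s - G j t|) (hδ0 : 0 ≤ δ)
    (hδ : δ < c / 2)
    {a b : Fin n → ℝ} (hab : a ≤ b) : mergeVec G δ a ≤ mergeVec G δ b := by
  intro j
  have hxy : a j ≤ b j := hab j
  simp only [mergeVec]
  exact mergeFn_mono (G j) (hc j) hδ0 hδ hxy
end

section
/- Sufficient Conditions for Grades to Merge: Let a, b ∈ ℝⁿ and G a grid with controlling constant c, δ < c/2, such that the distance from a to Grid_G is at most δ in sup-norm, and b ≥ a. If push along the diagonal line through U_δ^G(M_δ^G(a)) sends a and b to the same point, then M_δ^G(a) = M_δ^G(b). -/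
open Classical in
/-- The unmerge function `U_δ^G`, adding `δ` in each coordinate which lies within `δ`
of a grid value of the corresponding one-dimensional grid. -/
noncomputable def unmergeFn {n : ℕ} {k : Fin n → ℕ} (G : ∀ j, Fin (k j) → ℝ) (δ : ℝ)
    (a : Fin n → ℝ) : Fin n → ℝ :=
  fun i => mergeVec G δ a i + if ∃ t, |a i - G i t| ≤ δ then δ else 0

/-- The push of `x` onto the diagonal (slope `(1,...,1)`) line through `p`:
the least point of the line lying above `x`. -/
noncomputable def pushDiag {n : ℕ} (p x : Fin n → ℝ) : Fin n → ℝ :=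
  fun j => p j + ⨆ i, (x i - p i)

open Classical in
lemma mergeFn_spec {k : ℕ} (G : Fin k → ℝ) (δ : ℝ) (x : ℝ)
    (h : ∃ t, |x - G t| ≤ δ) : ∃ t, mergeFn G δ x = G t ∧ |x - G t| ≤ δ := by
  have h' : ∃ i, x ∈ Set.Icc (G i - δ) (G i + δ) := by
    obtain ⟨t, ht⟩ := h
    obtain ⟨h1, h2⟩ := abs_le.mp ht
    exact ⟨t, Set.mem_Icc.mpr ⟨by linarith, by linarith⟩⟩
  refine ⟨h'.choose, by rw [mergeFn, dif_pos h'], ?_⟩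
  obtain ⟨h1, h2⟩ := Set.mem_Icc.mp h'.choose_spec
  exact abs_le.mpr ⟨by linarith, by linarith⟩

lemma mergeFn_not {k : ℕ} (G : Fin k → ℝ) (δ : ℝ) (x : ℝ)
    (h : ¬ ∃ t, |x - G t| ≤ δ) : mergeFn G δ x = x := by
  have h' : ¬ ∃ i, x ∈ Set.Icc (G i - δ) (G i + δ) := by
    rintro ⟨i, hi⟩
    obtain ⟨h1, h2⟩ := Set.mem_Icc.mp hi
    exact h ⟨i, abs_le.mpr ⟨by linarith, by linarith⟩⟩
  rw [mergeFn, dif_neg h']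

lemma mergeFn_eq_of_close {k : ℕ} (G : Fin k → ℝ) (c δ : ℝ)
    (hc : ∀ s t, s ≠ t → c ≤ |G s - G t|) (hδ : δ < c / 2) (x : ℝ) (t : Fin k)
    (ht : |x - G t| ≤ δ) : mergeFn G δ x = G t := by
  obtain ⟨t', ht', hclose⟩ := mergeFn_spec G δ x ⟨t, ht⟩
  rcases eq_or_ne t' t with rfl | hne
  · exact ht'
  · exfalso
    have := hc t' t hne
    have : |G t' - G t| ≤ 2 * δ := by
      calc |G t' - G t| = |(x - G t) - (x - G t')| := by ring_nf
        _ ≤ |x - G t| + |x - G t'| := abs_sub _ _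
        _ ≤ 2 * δ := by linarith
    linarith [hc t' t hne]


/-- Sufficient Conditions for Grades to Merge: if `a` lies within `δ` of `Grid_G`,
`a ≤ b`, and `a` and `b` push to the same point of the diagonal line through
`U_δ^G(M_δ^G(a))`, then `M_δ^G(a) = M_δ^G(b)`. -/
theorem grades_merge {n : ℕ} (hn : 0 < n) {k : Fin n → ℕ} (G : ∀ j, Fin (k j) → ℝ)
    (hG : ∀ j, Function.Injective (G j))
    (c δ : ℝ) (hc : ∀ j s t, s ≠ t → c ≤ |G j s - G j t|) (hδ0 : 0 ≤ δ)
    (hδ : δ < c / 2)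
    (a b : Fin n → ℝ)
    (ha : ∃ j t, |a j - G j t| ≤ δ)
    (hab : a ≤ b)
    (hpush : pushDiag (unmergeFn G δ (mergeVec G δ a)) a
           = pushDiag (unmergeFn G δ (mergeVec G δ a)) b) :
    mergeVec G δ a = mergeVec G δ b := by
  have : Nonempty (Fin n) := ⟨⟨0, hn⟩⟩
  set p := unmergeFn G δ (mergeVec G δ a) with hp
  -- compute p i in the two cases
  have hpm : ∀ i, ∀ t : Fin (k i), |a i - G i t| ≤ δ →
      p i = G i t + δ ∧ mergeVec G δ a i = G i t := by
    intro i t ht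
    have hM : mergeVec G δ a i = G i t := mergeFn_eq_of_close (G i) c δ (hc i) hδ _ t ht
    have hcond : ∃ t', |mergeVec G δ a i - G i t'| ≤ δ := ⟨t, by rw [hM]; simpa⟩
    have h5 : p i = mergeFn (G i) δ (mergeVec G δ a i) +
        (if ∃ t', |mergeVec G δ a i - G i t'| ≤ δ then δ else 0) := rfl
    refine ⟨?_, hM⟩
    rw [h5, if_pos hcond, hM, mergeFn_eq_of_close (G i) c δ (hc i) hδ _ t (by simpa)]
  have hpn : ∀ i, ¬ (∃ t, |a i - G i t| ≤ δ) → p i = a i ∧ mergeVec G δ a i = a i := by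
    intro i hi
    have hM : mergeVec G δ a i = a i := mergeFn_not (G i) δ (a i) hi
    have hcond : ¬ ∃ t', |mergeVec G δ a i - G i t'| ≤ δ := by rw [hM]; exact hi
    have h5 : p i = mergeFn (G i) δ (mergeVec G δ a i) +
        (if ∃ t', |mergeVec G δ a i - G i t'| ≤ δ then δ else 0) := rfl
    refine ⟨?_, hM⟩
    rw [h5, if_neg hcond, hM, mergeFn_not (G i) δ (a i) hi, add_zero]
  -- sup equality
  have hsup : (⨆ i, (a i - p i)) = ⨆ i, (b i - p i) := by
    have := congrFun hpush ⟨0, hn⟩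
    simpa [pushDiag] using this
  have hsle : (⨆ i, (a i - p i)) ≤ 0 := by
    apply ciSup_le
    intro i
    by_cases hi : ∃ t, |a i - G i t| ≤ δ
    · obtain ⟨t, ht⟩ := hi
      obtain ⟨hpi, -⟩ := hpm i t ht
      have := (abs_le.mp ht).2
      rw [hpi]; linarith
    · rw [(hpn i hi).1]; simp
  have hble : ∀ i, b i - p i ≤ 0 := by
    intro i
    calc b i - p i ≤ ⨆ i, (b i - p i) :=
          le_ciSup (f := fun i => b i - p i) (Set.Finite.bddAbove (Set.finite_range _)) i
      _ = ⨆ i, (a i - p i) := hsup.symm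
      _ ≤ 0 := hsle
  funext i
  by_cases hi : ∃ t, |a i - G i t| ≤ δ
  · obtain ⟨t, ht⟩ := hi
    obtain ⟨hpi, hM⟩ := hpm i t ht
    have h1 : b i ≤ G i t + δ := by have := hble i; rw [hpi] at this; linarith
    have h2 : G i t - δ ≤ b i := le_trans (by linarith [(abs_le.mp ht).1]) (hab i)
    have hbt : |b i - G i t| ≤ δ := abs_le.mpr ⟨by linarith, by linarith⟩
    show mergeVec G δ a i = mergeFn (G i) δ (b i)
    rw [hM, mergeFn_eq_of_close (G i) c δ (hc i) hδ _ t hbt]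
  · obtain ⟨hpi, hM⟩ := hpn i hi
    have hba : b i = a i := le_antisymm (by have := hble i; rw [hpi] at this; linarith) (hab i)
    show mergeVec G δ a i = mergeFn (G i) δ (b i)
    rw [hM, hba, mergeFn_not (G i) δ (a i) hi]
end

section
/- Bar Code Simplification: if M is a 1-parameter persistence module decomposing as a direct sum of interval modules over half-open intervals [b_j, d_j), then the ε-simplification S_ε(M), defined as the image of the internal translation φ_ε^M shifted by T_ε, is isomorphic to the direct sum of interval modules over the simplified intervals: [b_j, ∞) if d_j = ∞; [b_j, d_j − ε) if d_j − b_j > ε; and the empty interval otherwise. -/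
/-- A persistence module over a poset `P` with coefficients in a field `K`. -/
structure PMod (P : Type) [Preorder P] (K : Type) [Field K] where
  V : P → Type
  [addCommGroup : ∀ a, AddCommGroup (V a)]
  [module : ∀ a, Module K (V a)]
  map : ∀ a b : P, a ≤ b → (V a →ₗ[K] V b)
  map_refl : ∀ a, map a a le_rfl = LinearMap.id
  map_comp : ∀ a b c (hab : a ≤ b) (hbc : b ≤ c),
    (map b c hbc).comp (map a b hab) = map a c (hab.trans hbc)

attribute [instance] PMod.addCommGroup PMod.module

/-- Isomorphism of persistence modules: a natural family of linear equivalences. -/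
def PModIso {P : Type} [Preorder P] {K : Type} [Field K] (M N : PMod P K) : Prop :=
  ∃ e : ∀ a, M.V a ≃ₗ[K] N.V a,
    ∀ a b (h : a ≤ b),
      (e b).toLinearMap.comp (M.map a b h) = (N.map a b h).comp (e a).toLinearMap

/-- The `ε`-simplification `S_ε(M) = (Im φ_ε^M) ∘ T_ε` of a 1-parameter
persistence module. -/
noncomputable def SimpMod1 {K : Type} [Field K] (ε : ℝ) (hε : 0 ≤ ε)
    (M : PMod ℝ K) : PMod ℝ K where
  V t := ↥(LinearMap.range (M.map t (t + ε) (le_add_of_nonneg_right hε)))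
  map s t h := (M.map (s + ε) (t + ε) (by linarith)).restrict
    (by
      rintro x ⟨y, rfl⟩
      refine ⟨M.map s t h y, ?_⟩
      have h1 := LinearMap.congr_fun
        (M.map_comp s (s + ε) (t + ε) (le_add_of_nonneg_right hε) (by linarith)) y
      have h2 := LinearMap.congr_fun
        (M.map_comp s t (t + ε) h (le_add_of_nonneg_right hε)) y
      simp only [LinearMap.comp_apply] at h1 h2
      rw [h2, ← h1])
  map_refl t := by
    ext x
    simp [LinearMap.restrict_apply, M.map_refl]
  map_comp s t u hst htu := by
    ext x
    have h1 := LinearMap.congr_fun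
      (M.map_comp (s + ε) (t + ε) (u + ε)
        (by linarith) (by linarith)) x.1
    simp only [LinearMap.comp_apply] at h1 ⊢
    simp [LinearMap.restrict_apply, h1]

open Classical in
/-- The interval module `𝟙^I`: one-dimensional over `I`, zero elsewhere, with
identity structure maps wherever possible. -/
noncomputable def intervalPMod (K : Type) [Field K] (I : Set ℝ) (hI : I.OrdConnected) :
    PMod ℝ K where
  V t := ↥(if t ∈ I then (⊤ : Submodule K K) else ⊥)
  map s t _ :=
    if h : s ∈ I ∧ t ∈ I then
      LinearMap.codRestrict _ (Submodule.subtype _) (fun x => by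
        rw [if_pos h.2]; exact Submodule.mem_top)
    else 0
  map_refl t := by
    ext x
    by_cases h : t ∈ I
    · beta_reduce
      rw [dif_pos (show t ∈ I ∧ t ∈ I from ⟨h, h⟩)]
      rfl
    · beta_reduce
      rw [dif_neg (by tauto : ¬ (t ∈ I ∧ t ∈ I))]
      have hx0 : x.1 = 0 := by
        have hv := x.2
        simp only [if_neg h] at hv
        exact (Submodule.mem_bot K).1 hv
      simp only [LinearMap.zero_apply, LinearMap.id_apply, ZeroMemClass.coe_zero]
      exact hx0.symm
  map_comp s t u hst htu := by
    ext x
    beta_reduce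
    by_cases hsu : s ∈ I ∧ u ∈ I
    · have ht : t ∈ I := hI.out hsu.1 hsu.2 ⟨hst, htu⟩
      rw [dif_pos (show s ∈ I ∧ t ∈ I from ⟨hsu.1, ht⟩),
        dif_pos (show t ∈ I ∧ u ∈ I from ⟨ht, hsu.2⟩), dif_pos hsu]
      rfl
    · rw [dif_neg hsu]
      by_cases hs : s ∈ I
      · have hu : u ∉ I := fun hu => hsu ⟨hs, hu⟩
        rw [dif_neg (show ¬ (t ∈ I ∧ u ∈ I) from fun hh => hu hh.2)]
        simp
      · rw [dif_neg (show ¬ (s ∈ I ∧ t ∈ I) from fun hh => hs hh.1)]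
        simp

open DirectSum in
/-- The direct sum of a family of persistence modules. -/
noncomputable def dsum {K : Type} [Field K] {ι : Type} [DecidableEq ι]
    (Ms : ι → PMod ℝ K) : PMod ℝ K where
  V a := ⨁ j, (Ms j).V a
  map a b h := DirectSum.toModule K ι (⨁ j, (Ms j).V b)
    (fun j => (DirectSum.lof K ι (fun j => (Ms j).V b) j).comp ((Ms j).map a b h))
  map_refl a := by
    refine DirectSum.linearMap_ext K fun j => ?_
    ext x
    simp [DirectSum.toModule_lof, (Ms j).map_refl]
  map_comp a b c hab hbc := by
    refine DirectSum.linearMap_ext K fun j => ?_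
    ext x
    simp only [LinearMap.comp_apply, DirectSum.toModule_lof]
    rw [← (Ms j).map_comp a b c hab hbc]
    simp [DirectSum.toModule_lof]

/-- The half-open interval `[b, d)` (with possibly infinite right endpoint). -/
def barSet (b : ℝ) (d : EReal) : Set ℝ := {t : ℝ | b ≤ t ∧ (t : EReal) < d}

lemma barSet_ordConnected (b : ℝ) (d : EReal) : (barSet b d).OrdConnected := by
  constructor
  rintro x ⟨hx1, hx2⟩ y ⟨hy1, hy2⟩ z hz
  exact ⟨hx1.trans hz.1, lt_of_le_of_lt (EReal.coe_le_coe_iff.2 hz.2) hy2⟩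

/-- The `ε`-simplification of the interval `[b, d)`:
`[b, ∞)` if `d = ∞`; `[b, d − ε)` if `d − b > ε`; and `∅` otherwise. -/
noncomputable def simpIco (ε b : ℝ) (d : EReal) : Set ℝ :=
  if d = ⊤ then Set.Ici b
  else if ((b + ε : ℝ) : EReal) < d then barSet b (d - (ε : EReal))
  else ∅

lemma simpIco_ordConnected (ε b : ℝ) (d : EReal) : (simpIco ε b d).OrdConnected := by
  unfold simpIco
  split_ifs
  · exact Set.ordConnected_Ici
  · exact barSet_ordConnected b _
  · exact Set.ordConnected_empty

section Helpers

variable {P : Type} [Preorder P] {K : Type} [Field K]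

lemma pmodIso_symm {M N : PMod P K} (h : PModIso M N) : PModIso N M := by
  obtain ⟨e, he⟩ := h
  refine ⟨fun a => (e a).symm, fun a b hab => ?_⟩
  ext x
  apply (e b).injective
  have := LinearMap.congr_fun (he a b hab) ((e a).symm x)
  simp only [LinearMap.comp_apply, LinearEquiv.coe_coe] at this ⊢
  simp [this]

lemma pmodIso_trans {M N L : PMod P K} (h1 : PModIso M N) (h2 : PModIso N L) :
    PModIso M L := by
  obtain ⟨e, he⟩ := h1
  obtain ⟨f, hf⟩ := h2
  refine ⟨fun a => (e a).trans (f a), fun a b hab => ?_⟩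
  ext x
  have h1' := LinearMap.congr_fun (he a b hab) x
  have h2' := LinearMap.congr_fun (hf a b hab) (e a x)
  simp only [LinearMap.comp_apply, LinearEquiv.coe_coe] at h1' h2' ⊢
  simp [h1', h2']

/-- Simplification preserves isomorphism. -/
lemma simpMod1_iso (ε : ℝ) (hε : 0 ≤ ε) {M N : PMod ℝ K} (h : PModIso M N) :
    PModIso (SimpMod1 ε hε M) (SimpMod1 ε hε N) := by
  obtain ⟨e, he⟩ := h
  have hrange : ∀ t : ℝ,
      Submodule.map (e (t + ε)).toLinearMap
        (LinearMap.range (M.map t (t + ε) (le_add_of_nonneg_right hε)))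
      = LinearMap.range (N.map t (t + ε) (le_add_of_nonneg_right hε)) := by
    intro t
    rw [← LinearMap.range_comp, he t (t + ε) (le_add_of_nonneg_right hε),
      LinearMap.range_comp_of_range_eq_top]
    exact LinearEquiv.range _
  refine ⟨fun t => ((e (t + ε)).submoduleMap
      (LinearMap.range (M.map t (t + ε) (le_add_of_nonneg_right hε)))).trans
      (LinearEquiv.ofEq _ _ (hrange t)), fun s t hst => ?_⟩
  ext x
  apply Subtype.ext
  have := LinearMap.congr_fun (he (s + ε) (t + ε) (add_le_add_left hst _)) x.1
  simp only [LinearMap.comp_apply, LinearEquiv.coe_coe] at this ⊢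
  simp only [SimpMod1, LinearMap.restrict_apply, LinearEquiv.trans_apply,
    LinearEquiv.coe_ofEq_apply, LinearEquiv.submoduleMap_apply]
  exact this

open DirectSum in
/-- Simplification commutes with direct sums. -/
lemma simpMod1_dsum (ε : ℝ) (hε : 0 ≤ ε) {ι : Type} [DecidableEq ι]
    (Ms : ι → PMod ℝ K) :
    PModIso (dsum fun j => SimpMod1 ε hε (Ms j)) (SimpMod1 ε hε (dsum Ms)) := by
  set h0 : ∀ t : ℝ, t ≤ t + ε := fun t => le_add_of_nonneg_right hε with h0def
  have memF : ∀ (t : ℝ) (j : ι)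
      (x : ↥(LinearMap.range ((Ms j).map t (t + ε) (h0 t)))),
      lof K ι (fun j => (Ms j).V (t + ε)) j x.1
        ∈ LinearMap.range ((dsum Ms).map t (t + ε) (h0 t)) := by
    rintro t j ⟨x, y, rfl⟩
    refine ⟨lof K ι (fun j => (Ms j).V t) j y, ?_⟩
    dsimp only [dsum]
    erw [DirectSum.toModule_lof K j]
    rfl
  set F : ∀ t : ℝ, ((dsum fun j => SimpMod1 ε hε (Ms j)).V t) →ₗ[K]
      ((SimpMod1 ε hε (dsum Ms)).V t) := fun t =>
    DirectSum.toModule K ι _ (fun j =>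
      LinearMap.codRestrict _
        ((lof K ι (fun j => (Ms j).V (t + ε)) j).comp (Submodule.subtype _))
        (fun x => memF t j x)) with Fdef
  have Fval : ∀ (t : ℝ) (j : ι) (x : (SimpMod1 ε hε (Ms j)).V t),
      (F t (lof K ι (fun i => (SimpMod1 ε hε (Ms i)).V t) j x)).1
        = lof K ι (fun j => (Ms j).V (t + ε)) j x.1 := by
    intro t j x
    rw [Fdef]
    beta_reduce
    erw [DirectSum.toModule_lof K j]
    rfl
  have hval : ∀ (t : ℝ)
      (x : ⨁ j, ↥(LinearMap.range ((Ms j).map t (t + ε) (h0 t)))),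
      (F t x).1 = DFinsupp.mapRange
        (fun i (y : ↥(LinearMap.range ((Ms i).map t (t + ε) (h0 t)))) =>
          (y : (Ms i).V (t + ε)))
        (fun i => rfl) x := by
    intro t x
    induction x using DirectSum.induction_on with
    | zero => erw [map_zero]; rfl
    | of j y =>
      have h1 := Fval t j y
      refine Eq.trans h1 ?_
      show (DFinsupp.single j (y.1) : Π₀ i, (Ms i).V (t + ε))
          = DFinsupp.mapRange
            (fun i (z : ↥(LinearMap.range ((Ms i).map t (t + ε) (h0 t)))) =>
              (z : (Ms i).V (t + ε)))
            (fun i => rfl)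
            (DFinsupp.single (β := fun i => ↥(LinearMap.range ((Ms i).map t (t + ε) (h0 t)))) j y)
      rw [DFinsupp.mapRange_single]
    | add a c ha hc =>
      erw [map_add, Submodule.coe_add]
      rw [DFinsupp.mapRange_add _ _ (fun i x y => rfl)]
      rw [← ha, ← hc]
      rfl
  have Finj : ∀ t : ℝ, Function.Injective (F t) := by
    intro t x y hxy
    have h1 : (F t x).1 = (F t y).1 := by rw [hxy]
    rw [hval t x, hval t y] at h1
    exact DFinsupp.ext fun j => Subtype.ext (by
      have := DFinsupp.ext_iff.1 h1 j
      exact this)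
  have Fsurj : ∀ t : ℝ, Function.Surjective (F t) := by
    intro t
    rintro ⟨z, w, rfl⟩
    suffices h : ∃ x, (F t x).1 = (dsum Ms).map t (t + ε) (h0 t) w by
      obtain ⟨x, hx⟩ := h
      exact ⟨x, Subtype.ext hx⟩
    induction w using DirectSum.induction_on with
    | zero => exact ⟨0, by erw [map_zero, map_zero]; rfl⟩
    | of j y =>
      refine ⟨lof K ι (fun i => (SimpMod1 ε hε (Ms i)).V t) j
        ⟨(Ms j).map t (t + ε) (h0 t) y, ⟨y, rfl⟩⟩, ?_⟩
      erw [Fval t j]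
      show _ = ((dsum Ms).map t (t + ε) (h0 t)) (lof K ι (fun i => (Ms i).V t) j y)
      dsimp only [dsum]
      erw [DirectSum.toModule_lof K j]
      rfl
    | add a c ha hc =>
      obtain ⟨x1, hx1⟩ := ha
      obtain ⟨x2, hx2⟩ := hc
      refine ⟨x1 + x2, ?_⟩
      erw [map_add, map_add, Submodule.coe_add, hx1, hx2]
  refine ⟨fun t => LinearEquiv.ofBijective (F t) ⟨Finj t, Fsurj t⟩, fun s t hst => ?_⟩
  refine DirectSum.linearMap_ext K fun j => ?_
  ext x
  apply Subtype.ext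
  simp only [LinearMap.comp_apply, LinearEquiv.coe_coe, LinearEquiv.ofBijective_apply]
  show (F t ((dsum fun j => SimpMod1 ε hε (Ms j)).map s t hst
      (lof K ι (fun i => (SimpMod1 ε hε (Ms i)).V s) j x))).1
    = ((SimpMod1 ε hε (dsum Ms)).map s t hst
      (F s (lof K ι (fun i => (SimpMod1 ε hε (Ms i)).V s) j x))).1
  have hd : ((dsum fun j => SimpMod1 ε hε (Ms j)).map s t hst)
      (lof K ι (fun i => (SimpMod1 ε hε (Ms i)).V s) j x)
      = lof K ι (fun i => (SimpMod1 ε hε (Ms i)).V t) j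
          ((SimpMod1 ε hε (Ms j)).map s t hst x) := by
    dsimp only [dsum]
    erw [DirectSum.toModule_lof K j]
    rfl
  erw [hd, Fval t j]
  have hrhs : ((SimpMod1 ε hε (dsum Ms)).map s t hst
        (F s (lof K ι (fun i => (SimpMod1 ε hε (Ms i)).V s) j x))).1
      = (dsum Ms).map (s + ε) (t + ε) (add_le_add_left hst ε)
          ((F s (lof K ι (fun i => (SimpMod1 ε hε (Ms i)).V s) j x)).1) := rfl
  erw [hrhs, Fval s j]
  show _ = ((dsum Ms).map (s + ε) (t + ε) (add_le_add_left hst ε))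
      (lof K ι (fun i => (Ms i).V (s + ε)) j x.1)
  dsimp only [dsum]
  erw [DirectSum.toModule_lof K j]
  rfl

lemma mem_simpIco_iff {ε b : ℝ} (hε : 0 ≤ ε) {d : EReal} {t : ℝ} :
    t ∈ simpIco ε b d ↔ (t ∈ barSet b d ∧ t + ε ∈ barSet b d) := by
  unfold simpIco barSet
  split_ifs with h1 h2
  · subst h1
    simp only [Set.mem_Ici, Set.mem_setOf_eq]
    constructor
    · intro ht
      exact ⟨⟨ht, EReal.coe_lt_top t⟩, ⟨ht.trans (le_add_of_nonneg_right hε),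
        EReal.coe_lt_top _⟩⟩
    · rintro ⟨⟨ht, _⟩, _⟩; exact ht
  · simp only [Set.mem_setOf_eq]
    have hsub : ∀ x : ℝ, (x : EReal) < d - (ε : EReal) ↔ ((x + ε : ℝ) : EReal) < d := by
      intro x
      rw [EReal.coe_add]
      exact EReal.lt_sub_iff_add_lt (Or.inl (EReal.coe_ne_bot ε))
        (Or.inl (EReal.coe_ne_top ε))
    constructor
    · rintro ⟨hbt, htd⟩
      have htd' := (hsub t).1 htd
      have htle : (t : EReal) ≤ ((t + ε : ℝ) : EReal) :=
        EReal.coe_le_coe_iff.2 (le_add_of_nonneg_right hε)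
      exact ⟨⟨hbt, lt_of_le_of_lt htle htd'⟩,
        ⟨hbt.trans (le_add_of_nonneg_right hε), htd'⟩⟩
    · rintro ⟨⟨hbt, _⟩, ⟨_, htd⟩⟩
      exact ⟨hbt, (hsub t).2 htd⟩
  · simp only [Set.mem_empty_iff_false, false_iff]
    rintro ⟨⟨hbt, _⟩, ⟨_, htd⟩⟩
    exact h2 (lt_of_le_of_lt (EReal.coe_le_coe_iff.2 (add_le_add_left hbt ε)) htd)

lemma intervalPMod_map_val {I : Set ℝ} {hI : I.OrdConnected}
    {a b : ℝ} (h : a ≤ b) (ha : a ∈ I) (hb : b ∈ I) (y : (intervalPMod K I hI).V a) :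
    ((intervalPMod K I hI).map a b h y).1 = y.1 := by
  classical
  show ((open Classical in if h' : a ∈ I ∧ b ∈ I then
      LinearMap.codRestrict _ (Submodule.subtype _) (fun x => by
        rw [if_pos h'.2]; exact Submodule.mem_top) else 0) y).1 = y.1
  rw [dif_pos ⟨ha, hb⟩]
  rfl

lemma intervalPMod_map_zero {I : Set ℝ} {hI : I.OrdConnected}
    {a b : ℝ} (h : a ≤ b) (hab : ¬ (a ∈ I ∧ b ∈ I)) :
    (intervalPMod K I hI).map a b h = 0 := by
  classical
  show (open Classical in if h' : a ∈ I ∧ b ∈ I then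
      LinearMap.codRestrict _ (Submodule.subtype _) (fun x => by
        rw [if_pos h'.2]; exact Submodule.mem_top) else 0) = 0
  rw [dif_neg hab]

/-- Simplification of an interval module over `[b, d)`. -/
lemma simpMod1_interval (ε : ℝ) (hε : 0 ≤ ε) (b : ℝ) (d : EReal) :
    PModIso (SimpMod1 ε hε (intervalPMod K (barSet b d) (barSet_ordConnected b d)))
      (intervalPMod K (simpIco ε b d) (simpIco_ordConnected ε b d)) := by
  classical
  set I := barSet b d with Idef
  set hI := barSet_ordConnected b d
  set J := simpIco ε b d with Jdef
  set A := intervalPMod K I hI with Adef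
  have key : ∀ t : ℝ, t ∈ J ↔ (t ∈ I ∧ t + ε ∈ I) := fun t => mem_simpIco_iff hε
  set h0 : ∀ t : ℝ, t ≤ t + ε := fun t => le_add_of_nonneg_right hε with h0def
  -- forward linear map
  set fwd : ∀ t : ℝ, ((SimpMod1 ε hε A).V t) →ₗ[K]
      ((intervalPMod K J (simpIco_ordConnected ε b d)).V t) := fun t =>
    if htJ : t ∈ J then
      LinearMap.codRestrict _
        ((Submodule.subtype _).comp (Submodule.subtype _))
        (fun x => by rw [if_pos htJ]; exact Submodule.mem_top)
    else 0 with fwddef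
  have fwdval : ∀ (t : ℝ) (htJ : t ∈ J) x, (fwd t x).1 = x.1.1 := by
    intro t htJ x
    simp only [fwddef]
    erw [dif_pos htJ]
    rfl
  have hsub : ∀ (t : ℝ), t ∉ J → Subsingleton ((SimpMod1 ε hε A).V t) := by
    intro t htJ
    constructor
    rintro ⟨x, hx⟩ ⟨y, hy⟩
    have hz := intervalPMod_map_zero (K := K) (I := I) (hI := hI) (h0 t)
      (fun hc => htJ ((key t).2 hc))
    have hz' : ∀ z, A.map t (t + ε) (h0 t) z = 0 := fun z => by rw [hz]; rfl
    apply Subtype.ext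
    obtain ⟨x', rfl⟩ := hx
    obtain ⟨y', rfl⟩ := hy
    show A.map t (t + ε) (h0 t) x' = A.map t (t + ε) (h0 t) y'
    rw [hz' x', hz' y']
  have hsub' : ∀ (t : ℝ), t ∉ J →
      Subsingleton ((intervalPMod K J (simpIco_ordConnected ε b d)).V t) := by
    intro t htJ
    show Subsingleton ↥(if t ∈ J then (⊤ : Submodule K K) else ⊥)
    rw [if_neg htJ]
    constructor
    rintro ⟨x, hx⟩ ⟨y, hy⟩
    apply Subtype.ext
    simp only [Submodule.mem_bot] at hx hy
    show x = y
    rw [hx, hy]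
  have hbij : ∀ t : ℝ, Function.Bijective (fwd t) := by
    intro t
    by_cases htJ : t ∈ J
    · obtain ⟨htI, htI'⟩ := (key t).1 htJ
      constructor
      · intro x y hxy
        apply Subtype.ext; apply Subtype.ext
        rw [← fwdval t htJ x, ← fwdval t htJ y, hxy]
      · intro y
        have hy1 : (y.1 : K) ∈ (if t + ε ∈ I then (⊤ : Submodule K K) else ⊥) := by
          rw [if_pos htI']; exact Submodule.mem_top
        have hmem : (⟨y.1, hy1⟩ : A.V (t + ε)) ∈
            LinearMap.range (A.map t (t + ε) (h0 t)) := by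
          refine ⟨⟨y.1, by rw [if_pos htI]; exact Submodule.mem_top⟩, ?_⟩
          apply Subtype.ext
          erw [intervalPMod_map_val (h0 t) htI htI']
        refine ⟨⟨⟨y.1, hy1⟩, hmem⟩, ?_⟩
        apply Subtype.ext
        erw [fwdval t htJ]
    · have := hsub t htJ
      have := hsub' t htJ
      constructor
      · intro x y _; exact Subsingleton.elim x y
      · intro y; exact ⟨0, Subsingleton.elim _ y⟩
  refine ⟨fun t => LinearEquiv.ofBijective (fwd t) (hbij t), fun s t hst => ?_⟩
  ext x
  simp only [LinearMap.comp_apply, LinearEquiv.coe_coe, LinearEquiv.ofBijective_apply]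
  by_cases hsJ : s ∈ J
  · by_cases htJ : t ∈ J
    · obtain ⟨hsI, hsI'⟩ := (key s).1 hsJ
      obtain ⟨htI, htI'⟩ := (key t).1 htJ
      apply Subtype.ext
      have hB : (((intervalPMod K J (simpIco_ordConnected ε b d)).map s t hst)
          (fwd s x)).1 = (fwd s x).1 :=
        intervalPMod_map_val hst hsJ htJ _
      rw [hB, fwdval s hsJ, fwdval t htJ]
      show (((SimpMod1 ε hε A).map s t hst x).1.1 : K) = x.1.1
      have hres : ((SimpMod1 ε hε A).map s t hst x).1
          = A.map (s + ε) (t + ε) (add_le_add_left hst ε) x.1 := rfl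
      rw [hres]
      exact intervalPMod_map_val (add_le_add_left hst ε) hsI' htI' x.1
    · have := hsub' t htJ
      exact Subsingleton.elim _ _
  · have := hsub s hsJ
    have hx0 : x = 0 := Subsingleton.elim x 0
    rw [hx0]
    simp

open DirectSum in
/-- Direct sums preserve isomorphism. -/
lemma dsum_iso {ι : Type} [DecidableEq ι] {Ms Ns : ι → PMod ℝ K}
    (h : ∀ j, PModIso (Ms j) (Ns j)) : PModIso (dsum Ms) (dsum Ns) := by
  choose e he using h
  refine ⟨fun a => DFinsupp.mapRange.linearEquiv (fun j => e j a), fun s t hst => ?_⟩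
  refine DirectSum.linearMap_ext K fun j => ?_
  ext x
  simp only [LinearMap.comp_apply, LinearEquiv.coe_coe]
  have hj : e j t ((Ms j).map s t hst x) = (Ns j).map s t hst (e j s x) := by
    have := LinearMap.congr_fun (he j s t hst) x
    simpa using this
  have hd : (dsum Ms).map s t hst (lof K ι (fun i => (Ms i).V s) j x)
      = lof K ι (fun i => (Ms i).V t) j ((Ms j).map s t hst x) := by
    dsimp only [dsum]
    erw [DirectSum.toModule_lof K j]
    rfl
  have hd' : (dsum Ns).map s t hst (lof K ι (fun i => (Ns i).V s) j (e j s x))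
      = lof K ι (fun i => (Ns i).V t) j ((Ns j).map s t hst (e j s x)) := by
    dsimp only [dsum]
    erw [DirectSum.toModule_lof K j]
    rfl
  have hm : ∀ (a : ℝ) (y : (Ms j).V a),
      (DFinsupp.mapRange.linearEquiv fun i => e i a) (lof K ι (fun i => (Ms i).V a) j y)
      = lof K ι (fun i => (Ns i).V a) j (e j a y) := by
    intro a y
    show DFinsupp.mapRange (fun i => ⇑(e i a)) (fun i => (e i a).map_zero)
        (DFinsupp.single (β := fun i => (Ms i).V a) j y)
      = DFinsupp.single j (e j a y)
    rw [DFinsupp.mapRange_single]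
  show (DFinsupp.mapRange.linearEquiv fun j => e j t)
      ((dsum Ms).map s t hst (lof K ι (fun i => (Ms i).V s) j x))
    = (dsum Ns).map s t hst
      ((DFinsupp.mapRange.linearEquiv fun j => e j s) (lof K ι (fun i => (Ms i).V s) j x))
  erw [hd, hm t, hm s, hd', hj]


end Helpers

/-- Bar Code Simplification: if a 1-parameter persistence module `M` decomposes as a
direct sum of interval modules over half-open intervals `[b_j, d_j)`, then its
`ε`-simplification `S_ε(M)` is isomorphic to the direct sum of the interval modules
over the simplified intervals. -/
theorem barcode_simplification {K : Type} [Field K] {ι : Type} [DecidableEq ι]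
    (ε : ℝ) (hε : 0 ≤ ε) (birth : ι → ℝ) (death : ι → EReal)
    (M : PMod ℝ K)
    (hM : PModIso M
      (dsum fun j => intervalPMod K (barSet (birth j) (death j))
        (barSet_ordConnected _ _))) :
    PModIso (SimpMod1 ε hε M)
      (dsum fun j => intervalPMod K (simpIco ε (birth j) (death j))
        (simpIco_ordConnected _ _ _)) := by
  have h1 := simpMod1_iso ε hε hM
  have h2 := pmodIso_symm (simpMod1_dsum ε hε
    (fun j => intervalPMod K (barSet (birth j) (death j)) (barSet_ordConnected _ _)))
  have h3 : PModIso
      (dsum fun j => SimpMod1 ε hε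
        (intervalPMod K (barSet (birth j) (death j)) (barSet_ordConnected _ _)))
      (dsum fun j => intervalPMod K (simpIco ε (birth j) (death j))
        (simpIco_ordConnected _ _ _)) :=
    dsum_iso (fun j => simpMod1_interval ε hε (birth j) (death j))
  exact pmodIso_trans h1 (pmodIso_trans h2 h3)
end
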